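/- arXiv:2401.15887 — 6 statements merged into one kernel-verified Lean document; each statement's English description precedes it below -/
import Mathlib

section
/- Let F : ℕ → K be a holonomic sequence over a field K of characteristic 0 and let L = Σ_{i=0}^J a_i(n)σ^i (a_i ∈ K[n], L ≠ 0) be an annihilator of F. Then there exists a nonzero polynomial p(n) ∈ K[n] such that p(n)F(n) is summable and deg p(n) ≤ deg L + C_L, where deg L is the degree of L and C_L is the continued zero index of L. (Indeed p(n) = L*(n^{C_L}) works.) -/
open Polynomial Finset

/-- The polynomials `b_k(n) = ∑_{j=k}^J binom(j,k) a_{J-j}(n+j-J)` attached to the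
operator `L = ∑_{i=0}^J a_i(n) σ^i`. -/
noncomputable def bPoly {K : Type*} [Field K] (J : ℕ) (a : ℕ → K[X]) (k : ℕ) : K[X] :=
  ∑ j ∈ Finset.Icc k J, (j.choose k : K) • (a (J - j)).comp (X + C ((j : K) - (J : K)))

/-- The degree of the operator `L = ∑_{i=0}^J a_i(n) σ^i`:
`deg L = max_{0 ≤ k ≤ J} (deg b_k(n) - k)`, an element of `WithBot ℤ`
(the zero polynomial having degree `⊥ = -∞`). -/
noncomputable def opDegree {K : Type*} [Field K] (J : ℕ) (a : ℕ → K[X]) : WithBot ℤ :=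
  (Finset.range (J + 1)).sup fun k =>
    WithBot.map (fun d : ℕ => (d : ℤ) - (k : ℤ)) (bPoly J a k).degree

/-- The adjoint `L*` applied to a polynomial `x`:
`L*(x)(n) = ∑_{i=0}^J a_i(n-i) x(n-i)`. -/
noncomputable def adjointApply {K : Type*} [Field K] (J : ℕ) (a : ℕ → K[X]) (x : K[X]) : K[X] :=
  ∑ i ∈ Finset.range (J + 1), ((a i).comp (X - C (i : K))) * (x.comp (X - C (i : K)))

/-- The continued zero index `C_L`: the least `c ∈ ℕ` with `L*(n^c) ≠ 0`. -/
noncomputable def contZeroIndex {K : Type*} [Field K] (J : ℕ) (a : ℕ → K[X]) : ℕ :=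
  sInf {c : ℕ | adjointApply J a (X ^ c) ≠ 0}

/-- The operator `L = ∑_{i=0}^J a_i(n) σ^i` annihilates the sequence `F` if
`∑_{i=0}^J a_i(n) F(n+i) = 0` for all `n ∈ ℕ`. -/
def Annihilates {K : Type*} [Field K] (J : ℕ) (a : ℕ → K[X]) (F : ℕ → K) : Prop :=
  ∀ n : ℕ, ∑ i ∈ Finset.range (J + 1), (a i).eval (n : K) * F (n + i) = 0

/-- `F` is holonomic: it admits a nonzero annihilating operator. -/
def Holonomic {K : Type*} [Field K] (F : ℕ → K) : Prop :=
  ∃ (J : ℕ) (a : ℕ → K[X]), (∃ i ≤ J, a i ≠ 0) ∧ Annihilates J a F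

/-- `F` has order `J`: `J` is the minimal order of a nonzero annihilator of `F`. -/
def HasOrder {K : Type*} [Field K] (F : ℕ → K) (J : ℕ) : Prop :=
  (∃ a : ℕ → K[X], (∃ i ≤ J, a i ≠ 0) ∧ Annihilates J a F) ∧
    ∀ J' < J, ∀ a : ℕ → K[X], (∃ i ≤ J', a i ≠ 0) → ¬ Annihilates J' a F

/-- `(num(n)/den(n))·F(n)` is summable: there are rational functions
`u_i = u i / v i`, `0 ≤ i ≤ J-1`, such that
`num(n)/den(n) · F(n) = ∑_i u_i(n+1) F(n+1+i) - ∑_i u_i(n) F(n+i)`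
for all `n` at which all rational functions involved are defined. -/
def IsSummableRat {K : Type*} [Field K] (J : ℕ) (F : ℕ → K) (num den : K[X]) : Prop :=
  ∃ u v : ℕ → K[X], (∀ i < J, v i ≠ 0) ∧ ∀ n : ℕ,
    den.eval (n : K) ≠ 0 →
    (∀ i < J, (v i).eval (n : K) ≠ 0 ∧ (v i).eval ((n : K) + 1) ≠ 0) →
    num.eval (n : K) / den.eval (n : K) * F n =
      (∑ i ∈ Finset.range J,
          (u i).eval ((n : K) + 1) / (v i).eval ((n : K) + 1) * F (n + 1 + i)) -
        ∑ i ∈ Finset.range J, (u i).eval (n : K) / (v i).eval (n : K) * F (n + i)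

/-- The coefficient of `n^m` in a polynomial, for an integer index `m`
(zero for negative `m`). -/
noncomputable def coeffZ {K : Type*} [Field K] (b : K[X]) (m : ℤ) : K :=
  if 0 ≤ m then b.coeff m.toNat else 0

/-- The value `f(s) = ∑_{k=0}^J [n^{d+k}](b_k(n)) · s(s-1)⋯(s-k+1)`, where `d = deg L`. -/
noncomputable def fVal {K : Type*} [Field K] (J : ℕ) (a : ℕ → K[X]) (s : ℕ) : K :=
  ∑ k ∈ Finset.range (J + 1),
    coeffZ (bPoly J a k) ((opDegree J a).unbotD 0 + (k : ℤ)) *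
      ∏ j ∈ Finset.range k, ((s : K) - (j : K))

/-- `L` is nondegenerated if `f(s)` has no root in `ℕ`. -/
def Nondegenerated {K : Type*} [Field K] (J : ℕ) (a : ℕ → K[X]) : Prop :=
  ∀ s : ℕ, fVal J a s ≠ 0

/-- `d_L = max_{0 ≤ i ≤ J} deg a_i(n)`. -/
noncomputable def dLdeg {K : Type*} [Field K] (J : ℕ) (a : ℕ → K[X]) : ℕ :=
  (Finset.range (J + 1)).sup fun i => (a i).natDegree

/-! `L*(x) F` is summable for every polynomial `x`: multiplying the recurrence
`∑ a_i(n) F(n + i) = 0` by `x(n)` and shifting each term back by `i` telescopes.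
For the degree, Newton's formula turns `L*(x)(n) = ∑_j a_{J-j}(n + j - J) y(n + j)`, with
`y(n) = x(n - J)`, into `∑_k b_k(n) Δ^k y(n)`, and `deg Δ^k y ≤ deg x - k`; hence
`deg L*(x) ≤ deg L + deg x`, applied to `x = n^{C_L}`. -/

namespace Polynomial

variable {R : Type*} [CommRing R]

variable (R) in
noncomputable def fwdDiffOp : Module.End R R[X] := taylor 1 - 1

lemma fwdDiffOp_apply (p : R[X]) : fwdDiffOp R p = taylor 1 p - p := rfl

lemma degree_fwdDiffOp_lt {p : R[X]} (hp : p ≠ 0) : (fwdDiffOp R p).degree < p.degree := by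
  rw [fwdDiffOp_apply]
  exact degree_sub_lt_right (degree_taylor p 1) hp (leadingCoeff_taylor 1 p)

lemma natDegree_fwdDiffOp_pow_add_le {p : R[X]} {k : ℕ} (h : (fwdDiffOp R ^ k) p ≠ 0) :
    ((fwdDiffOp R ^ k) p).natDegree + k ≤ p.natDegree := by
  induction k with
  | zero => simp
  | succ k ih =>
    rw [pow_succ', Module.End.mul_apply] at h ⊢
    have hk : (fwdDiffOp R ^ k) p ≠ 0 := fun h0 => h (by rw [h0, map_zero])
    have := natDegree_lt_natDegree h (degree_fwdDiffOp_lt hk)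
    have := ih hk
    omega

lemma taylor_one_pow (j : ℕ) : taylor (1 : R) ^ j = taylor (j : R) := by
  induction j with
  | zero => simp [taylor_zero', Module.End.one_eq_id]
  | succ j ih =>
    refine LinearMap.ext fun p => ?_
    rw [pow_succ', Module.End.mul_apply, ih, taylor_taylor, Nat.cast_succ, add_comm]

lemma taylor_natCast_eq_sum (j : ℕ) (p : R[X]) :
    taylor (j : R) p = ∑ k ∈ range (j + 1), (j.choose k : R) • (fwdDiffOp R ^ k) p := by
  rw [← taylor_one_pow, ← sub_add_cancel (taylor (1 : R)) 1, (Commute.one_right _).add_pow,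
    LinearMap.sum_apply]
  refine sum_congr rfl fun k _ => ?_
  rw [one_pow, mul_one, Module.End.mul_apply, Module.End.natCast_apply, map_nsmul,
    Nat.cast_smul_eq_nsmul]
  rfl

end Polynomial

lemma Polynomial.exists_ne_zero_natDegree_sum_le {R ι : Type*} [Semiring R] {s : Finset ι}
    {f : ι → R[X]} (h : ∑ i ∈ s, f i ≠ 0) :
    ∃ i ∈ s, f i ≠ 0 ∧ (∑ i ∈ s, f i).natDegree ≤ (f i).natDegree := by
  have hle := degree_sum_le s f
  rw [degree_eq_natDegree h] at hle
  obtain ⟨i, hi, hle⟩ := (Finset.le_sup_iff (WithBot.bot_lt_coe _)).mp hle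
  refine ⟨i, hi, fun h0 => ?_, le_natDegree_of_coe_le_degree hle⟩
  simp [h0] at hle

lemma Finset.sum_range_sub_shift_eq_sub_sum_Icc {M : Type*} [AddCommGroup M] (J : ℕ)
    (h : ℕ → ℕ → M) (n : ℕ) :
    ∑ i ∈ range (J + 1), (h i n - h i (n + i)) =
      ∑ m ∈ range J, ∑ i ∈ Icc (m + 1) J, h i (n + m) -
        ∑ m ∈ range J, ∑ i ∈ Icc (m + 1) J, h i (n + 1 + m) := by
  have hswap (r : ℕ) : ∑ m ∈ range J, ∑ i ∈ Icc (m + 1) J, h i (r + m) =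
      ∑ i ∈ range (J + 1), ∑ m ∈ range i, h i (r + m) :=
    sum_comm' fun m i => by simp only [mem_range, mem_Icc]; omega
  rw [hswap, hswap, ← sum_sub_distrib]
  refine sum_congr rfl fun i _ => ?_
  rw [← sum_sub_distrib]
  simpa [add_right_comm n 1, ← add_assoc] using (sum_range_sub' (fun m => h i (n + m)) i).symm

section Adjoint

variable {K : Type*} [Field K] (J : ℕ) (a : ℕ → K[X])

lemma adjointApply_eq_sum_bPoly (x : K[X]) :
    adjointApply J a x =
      ∑ k ∈ range (J + 1), bPoly J a k * (fwdDiffOp K ^ k) (taylor (-(J : K)) x) := by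
  set y := taylor (-(J : K)) x
  have shift (j : ℕ) : x.comp (X + C ((j : K) - J)) =
      ∑ k ∈ range (j + 1), (j.choose k : K) • (fwdDiffOp K ^ k) y := by
    rw [← taylor_natCast_eq_sum, taylor_taylor, taylor_apply, sub_eq_add_neg]
  calc adjointApply J a x
      = ∑ j ∈ range (J + 1),
          (a (J - j)).comp (X + C ((j : K) - J)) * x.comp (X + C ((j : K) - J)) := by
        rw [adjointApply, ← sum_range_reflect]
        refine sum_congr rfl fun j hj => ?_
        have hj : j ≤ J := Nat.lt_succ_iff.mp (mem_range.mp hj)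
        rw [Nat.add_sub_cancel, Nat.cast_sub hj, sub_eq_add_neg (X : K[X]), ← C_neg, neg_sub]
    _ = ∑ j ∈ range (J + 1), ∑ k ∈ range (j + 1),
          (j.choose k : K) • ((a (J - j)).comp (X + C ((j : K) - J)) * (fwdDiffOp K ^ k) y) := by
        simp_rw [shift, mul_sum, mul_smul_comm]
    _ = ∑ k ∈ range (J + 1), ∑ j ∈ Icc k J,
          (j.choose k : K) • ((a (J - j)).comp (X + C ((j : K) - J)) * (fwdDiffOp K ^ k) y) :=
        sum_comm' fun j k => by simp only [mem_range, mem_Icc]; omega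
    _ = _ := by simp_rw [bPoly, sum_mul, smul_mul_assoc]

end Adjoint

section Degree

variable {K : Type*} [Field K] {J : ℕ} {a : ℕ → K[X]}

lemma natDegree_bPoly_sub_le_opDegree {k : ℕ} (hk : k ≤ J) (hb : bPoly J a k ≠ 0) :
    ((((bPoly J a k).natDegree : ℤ) - k : ℤ) : WithBot ℤ) ≤ opDegree J a := by
  have hle := le_sup (f := fun k : ℕ => WithBot.map (fun d : ℕ => (d : ℤ) - (k : ℤ))
    (bPoly J a k).degree) (mem_range.mpr (Nat.lt_succ_of_le hk))
  rwa [degree_eq_natDegree hb] at hle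

lemma natDegree_adjointApply_le {x : K[X]} (hx : adjointApply J a x ≠ 0) :
    (((adjointApply J a x).natDegree : ℤ) : WithBot ℤ) ≤
      opDegree J a + (x.natDegree : ℤ) := by
  rw [adjointApply_eq_sum_bPoly] at hx ⊢
  obtain ⟨k, hk, hterm, hle⟩ := exists_ne_zero_natDegree_sum_le hx
  obtain ⟨hb, hd⟩ := mul_ne_zero_iff.mp hterm
  have hdiff := natDegree_fwdDiffOp_pow_add_le hd
  rw [natDegree_mul hb hd] at hle
  rw [natDegree_taylor] at hdiff
  calc (((∑ k ∈ range (J + 1), bPoly J a k * (fwdDiffOp K ^ k) (taylor (-(J : K)) x)).natDegree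
          : ℤ) : WithBot ℤ)
      ≤ ((((bPoly J a k).natDegree : ℤ) - k : ℤ) : WithBot ℤ) + (x.natDegree : ℤ) := by
        rw [← WithBot.coe_add, WithBot.coe_le_coe]
        omega
    _ ≤ opDegree J a + (x.natDegree : ℤ) := by
        gcongr
        exact natDegree_bPoly_sub_le_opDegree (Nat.lt_succ_iff.mp (mem_range.mp hk)) hb

end Degree

section Nonvanishing

variable {K : Type*} [Field K] [CharZero K] {J : ℕ} {a : ℕ → K[X]}

/-- Evaluated at `t`, the identities `L*(n^c) = 0` for `c ≤ J` form a Vandermonde system in the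
values `a_i(t - i)` at the distinct nodes `t - i`. -/
lemma exists_adjointApply_X_pow_ne_zero (hL : ∃ i ≤ J, a i ≠ 0) :
    ∃ c : ℕ, adjointApply J a (X ^ c) ≠ 0 := by
  by_contra! h
  obtain ⟨i₀, hi₀, ha⟩ := hL
  refine ha (Polynomial.funext fun s => ?_)
  set t : K := s + i₀
  have hnodes : Function.Injective fun i : Fin (J + 1) => t - (i : ℕ) := fun i j hij => by
    simpa [Fin.ext_iff] using hij
  have hvals := Matrix.eq_zero_of_forall_pow_sum_mul_pow_eq_zero hnodes
    (v := fun i : Fin (J + 1) => (a i).eval (t - (i : ℕ))) fun c => by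
      simpa [adjointApply, eval_finsetSum, sum_range] using congr_arg (eval t) (h c)
  simpa [t] using congr_fun hvals ⟨i₀, Nat.lt_succ_of_le hi₀⟩

lemma adjointApply_X_pow_contZeroIndex_ne_zero (hL : ∃ i ≤ J, a i ≠ 0) :
    adjointApply J a (X ^ contZeroIndex J a) ≠ 0 :=
  Nat.sInf_mem (exists_adjointApply_X_pow_ne_zero hL)

end Nonvanishing

section Summable

variable {K : Type*} [Field K] (J : ℕ) (a : ℕ → K[X])

noncomputable def antidiffCoeff (x : K[X]) (m : ℕ) : K[X] :=
  -∑ i ∈ Icc (m + 1) J, (a i * x).comp (X + C ((m : K) - i))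

lemma adjointApply_eval_mul_eq_sub {F : ℕ → K} (hann : Annihilates J a F) (x : K[X]) (n : ℕ) :
    (adjointApply J a x).eval (n : K) * F n =
      ∑ m ∈ range J, (antidiffCoeff J a x m).eval ((n : K) + 1) * F (n + 1 + m) -
        ∑ m ∈ range J, (antidiffCoeff J a x m).eval (n : K) * F (n + m) := by
  set h : ℕ → ℕ → K := fun i r => (a i * x).eval ((r : K) - i) * F r
  have hcoeff (r m : ℕ) : (antidiffCoeff J a x m).eval (r : K) * F (r + m) =
      -∑ i ∈ Icc (m + 1) J, h i (r + m) := by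
    simp only [antidiffCoeff, h, eval_neg, eval_finsetSum, eval_comp, eval_add, eval_X, eval_C,
      neg_mul, sum_mul, Nat.cast_add, add_sub_assoc]
  have hvanish : ∑ i ∈ range (J + 1), h i (n + i) = 0 := by
    have hterm (i : ℕ) : h i (n + i) = x.eval (n : K) * ((a i).eval (n : K) * F (n + i)) := by
      simp only [h, eval_mul, Nat.cast_add, add_sub_cancel_right]
      ring
    rw [sum_congr rfl fun i _ => hterm i, ← mul_sum, hann n, mul_zero]
  have hshift : ∑ m ∈ range J, (antidiffCoeff J a x m).eval ((n : K) + 1) * F (n + 1 + m) =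
      -∑ m ∈ range J, ∑ i ∈ Icc (m + 1) J, h i (n + 1 + m) := by
    rw [← sum_neg_distrib]
    exact_mod_cast sum_congr rfl fun m _ => hcoeff (n + 1) m
  calc (adjointApply J a x).eval (n : K) * F n
      = ∑ i ∈ range (J + 1), (h i n - h i (n + i)) := by
        rw [sum_sub_distrib, hvanish, sub_zero]
        simp [h, adjointApply, eval_finsetSum, sum_mul]
    _ = _ := by
        rw [sum_range_sub_shift_eq_sub_sum_Icc, hshift, sum_congr rfl fun m _ => hcoeff n m,
          sum_neg_distrib]
        abel

lemma isSummableRat_adjointApply {F : ℕ → K} (hann : Annihilates J a F) (x : K[X]) :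
    IsSummableRat J F (adjointApply J a x) 1 :=
  ⟨antidiffCoeff J a x, fun _ => 1, fun _ _ => one_ne_zero, fun n _ _ => by
    simpa only [eval_one, div_one] using adjointApply_eval_mul_eq_sub J a hann x n⟩

end Summable

theorem upper_bound_summable_polynomial_general {K : Type*} [Field K] [CharZero K]
    (F : ℕ → K) (J : ℕ) (a : ℕ → K[X])
    (hL : ∃ i ≤ J, a i ≠ 0) (hann : Annihilates J a F) :
    ∃ p : K[X], p ≠ 0 ∧ IsSummableRat J F p 1 ∧
      ((p.natDegree : ℤ) : WithBot ℤ) ≤ opDegree J a + ((contZeroIndex J a : ℤ) : WithBot ℤ) ∧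
      p = adjointApply J a (X ^ contZeroIndex J a) := by
  have hp := adjointApply_X_pow_contZeroIndex_ne_zero hL
  refine ⟨_, hp, isSummableRat_adjointApply J a hann _, ?_, rfl⟩
  simpa using natDegree_adjointApply_le hp

/-- If `F` is holonomic and `L = ∑_{i=0}^J a_i(n) σ^i ≠ 0` annihilates `F`,
then there is a nonzero polynomial `p` such that `p(n)F(n)` is summable and
`deg p ≤ deg L + C_L`; indeed `p = L*(n^{C_L})` works. -/
theorem upper_bound_summable_polynomial {K : Type*} [Field K] [CharZero K]
    (F : ℕ → K) (hF : Holonomic F) (J : ℕ) (a : ℕ → K[X])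
    (hL : ∃ i ≤ J, a i ≠ 0) (hann : Annihilates J a F) :
    ∃ p : K[X], p ≠ 0 ∧ IsSummableRat J F p 1 ∧
      ((p.natDegree : ℤ) : WithBot ℤ) ≤ opDegree J a + ((contZeroIndex J a : ℤ) : WithBot ℤ) ∧
      p = adjointApply J a (X ^ contZeroIndex J a) :=
  upper_bound_summable_polynomial_general F J a hL hann
end

section
/- Let L = Σ_{i=0}^J a_i(n)σ^i be a nonzero operator with polynomial coefficients over a field K of characteristic 0. If L is nondegenerated, then the continued zero index of L is 0, i.e., L*(1) ≠ 0. -/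
open Polynomial Finset

/-
Evaluating `f` at `s = 0` kills every falling factorial except the empty one,
so `f(0)` is the coefficient of `n^{deg L}` in `b_0`. Hence nondegeneracy forces `b_0 ≠ 0`, and
reindexing `j ↦ J - j` identifies `b_0` with `L*(1)`.
-/

section

variable {K : Type*} [Field K]

@[simp]
lemma coeffZ_zero (m : ℤ) : coeffZ (0 : K[X]) m = 0 := by
  simp [coeffZ]

lemma adjointApply_one_eq_bPoly_zero (J : ℕ) (a : ℕ → K[X]) :
    adjointApply J a 1 = bPoly J a 0 := by
  rw [adjointApply, bPoly, ← Nat.range_succ_eq_Icc_zero, ← sum_range_reflect]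
  refine sum_congr rfl fun i hi => ?_
  have hiJ : i ≤ J := Nat.lt_succ_iff.mp (mem_range.mp hi)
  simp only [Nat.choose_zero_right, Nat.cast_one, one_smul, mul_one, one_comp]
  congr 2
  rw [Nat.add_sub_cancel, Nat.cast_sub hiJ, map_sub, map_sub]
  ring

lemma fVal_zero (J : ℕ) (a : ℕ → K[X]) :
    fVal J a 0 = coeffZ (bPoly J a 0) ((opDegree J a).unbotD 0) := by
  rw [fVal, sum_eq_single_of_mem 0 (mem_range.mpr J.succ_pos)]
  · simp
  · intro k _ hk
    rw [prod_eq_zero (mem_range.mpr (Nat.pos_of_ne_zero hk)) (by simp), mul_zero]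

lemma bPoly_zero_ne_zero_of_nondegenerated {J : ℕ} {a : ℕ → K[X]} (hnd : Nondegenerated J a) :
    bPoly J a 0 ≠ 0 := by
  intro hb
  simpa [fVal_zero, hb] using hnd 0

lemma contZeroIndex_eq_zero_of_adjointApply_one_ne_zero {J : ℕ} {a : ℕ → K[X]}
    (h : adjointApply J a 1 ≠ 0) : contZeroIndex J a = 0 :=
  Nat.sInf_eq_zero.mpr (.inl (by simpa using h))

end

theorem contZeroIndex_eq_zero_of_nondegenerated_general {K : Type*} [Field K]
    (J : ℕ) (a : ℕ → K[X]) (hnd : Nondegenerated J a) :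
    adjointApply J a 1 ≠ 0 ∧ contZeroIndex J a = 0 := by
  have hL1 : adjointApply J a 1 ≠ 0 := by
    rw [adjointApply_one_eq_bPoly_zero]
    exact bPoly_zero_ne_zero_of_nondegenerated hnd
  exact ⟨hL1, contZeroIndex_eq_zero_of_adjointApply_one_ne_zero hL1⟩

/-- If the nonzero operator `L = ∑_{i=0}^J a_i(n) σ^i` is nondegenerated,
then its continued zero index is `0`, i.e. `L*(1) ≠ 0`. -/
theorem contZeroIndex_eq_zero_of_nondegenerated {K : Type*} [Field K] [CharZero K]
    (J : ℕ) (a : ℕ → K[X]) (hL : ∃ i ≤ J, a i ≠ 0) (hnd : Nondegenerated J a) :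
    adjointApply J a 1 ≠ 0 ∧ contZeroIndex J a = 0 :=
  contZeroIndex_eq_zero_of_nondegenerated_general J a hnd
end

section
/- Let L = Σ_{i=0}^J a_i(n)σ^i be a nonzero operator with polynomial coefficients over a field K of characteristic 0 and set d_L = max_{0≤i≤J} deg a_i(n). Then deg L ≤ d_L, and if deg L = d_L then L is nondegenerated. -/
open Polynomial Finset

/-!
Each `b_k` is a combination of shifts `a_i(n + h)`, so `deg b_k ≤ d_L` and the `k`-th term
`deg b_k - k` of `deg L` is at most `d_L - k`. Hence `deg L = d_L` can only be attained at
`k = 0`, with `deg b_0 = d_L`. Then `[n^{d_L + k}] b_k = 0` for every `k ≥ 1`, so `f` is the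
nonzero constant `[n^{d_L}] b_0`.
-/

lemma map_degree_sub_le {R : Type*} [Semiring R] {p : R[X]} {n : ℕ} (h : p.natDegree ≤ n)
    (k : ℕ) :
    p.degree.map (fun d : ℕ => (d : ℤ) - k) ≤ (((n : ℤ) - k : ℤ) : WithBot ℤ) := by
  by_cases hp : p = 0
  · simp [hp]
  · rw [degree_eq_natDegree hp, WithBot.map_natCast, Nat.cast_id]
    exact WithBot.coe_le_coe.mpr (by omega)

lemma coeffZ_natCast {K : Type*} [Field K] (b : K[X]) (n : ℕ) : coeffZ b n = b.coeff n := by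
  simp [coeffZ]

section

variable {K : Type*} [Field K] (J : ℕ) (a : ℕ → K[X])

lemma natDegree_bPoly_le (k : ℕ) : (bPoly J a k).natDegree ≤ dLdeg J a := by
  refine natDegree_sum_le_of_forall_le _ _ fun j _ => (natDegree_smul_le _ _).trans ?_
  rw [natDegree_comp, natDegree_X_add_C, mul_one]
  exact Finset.le_sup (f := fun i => (a i).natDegree) (mem_range.mpr (by omega))

lemma opDegree_le_dLdeg : opDegree J a ≤ ((dLdeg J a : ℤ) : WithBot ℤ) :=
  Finset.sup_le fun k _ =>
    (map_degree_sub_le (natDegree_bPoly_le J a k) k).trans (WithBot.coe_le_coe.mpr (by omega))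

variable {J a}

lemma degree_bPoly_zero_of_opDegree_eq (h : opDegree J a = ((dLdeg J a : ℤ) : WithBot ℤ)) :
    (bPoly J a 0).degree = dLdeg J a := by
  obtain ⟨k, -, hsup⟩ := exists_mem_eq_sup (range (J + 1)) nonempty_range_add_one
    fun k => (bPoly J a k).degree.map (fun d : ℕ => (d : ℤ) - k)
  have hk : (bPoly J a k).degree.map (fun d : ℕ => (d : ℤ) - k) =
      ((dLdeg J a : ℤ) : WithBot ℤ) :=
    hsup ▸ h
  have hb : bPoly J a k ≠ 0 := by
    rintro hb
    simp [hb] at hk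
  rw [degree_eq_natDegree hb, WithBot.map_natCast, Nat.cast_id, WithBot.coe_inj] at hk
  have := natDegree_bPoly_le J a k
  obtain rfl : k = 0 := by omega
  rw [degree_eq_natDegree hb]
  exact_mod_cast (by omega : (bPoly J a 0).natDegree = dLdeg J a)

lemma fVal_eq_coeff_of_opDegree_eq (h : opDegree J a = ((dLdeg J a : ℤ) : WithBot ℤ))
    (s : ℕ) :
    fVal J a s = (bPoly J a 0).coeff (dLdeg J a) := by
  have hd : (opDegree J a).unbotD 0 = dLdeg J a := by rw [h]; rfl
  rw [fVal, hd, sum_eq_single 0]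
  · simp [coeffZ_natCast]
  · intro k _ hk
    rw [← Nat.cast_add, coeffZ_natCast, coeff_eq_zero_of_natDegree_lt, zero_mul]
    have := natDegree_bPoly_le J a k
    omega
  · simp

end

theorem opDegree_le_dL_and_nondegenerated_general {K : Type*} [Field K]
    (J : ℕ) (a : ℕ → K[X]) :
    opDegree J a ≤ ((dLdeg J a : ℤ) : WithBot ℤ) ∧
      (opDegree J a = ((dLdeg J a : ℤ) : WithBot ℤ) → Nondegenerated J a) :=
  ⟨opDegree_le_dLdeg J a, fun h s => by
    rw [fVal_eq_coeff_of_opDegree_eq h]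
    exact coeff_ne_zero_of_eq_degree (degree_bPoly_zero_of_opDegree_eq h)⟩

/-- For a nonzero operator `L = ∑_{i=0}^J a_i(n) σ^i` with
`d_L = max_{0 ≤ i ≤ J} deg a_i(n)`, one has `deg L ≤ d_L`, and if `deg L = d_L` then `L`
is nondegenerated. -/
theorem opDegree_le_dL_and_nondegenerated {K : Type*} [Field K] [CharZero K]
    (J : ℕ) (a : ℕ → K[X]) (hL : ∃ i ≤ J, a i ≠ 0) :
    opDegree J a ≤ ((dLdeg J a : ℤ) : WithBot ℤ) ∧
      (opDegree J a = ((dLdeg J a : ℤ) : WithBot ℤ) → Nondegenerated J a) :=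
  opDegree_le_dL_and_nondegenerated_general J a
end

section
/- Let F : ℕ → K be a holonomic sequence over a field K of characteristic 0, let L = Σ_{i=0}^J a_i(n)σ^i be a strongly nondegenerated annihilator of F of order J > 0, and write a_0(n) = A_0(n)·Ã_0(n) with A_0, Ã_0 ∈ K[n]. Then for every p(n) ∈ K[n] and every integer I ≥ J there exist a polynomial p̃(n) ∈ K[n] with deg p̃(n) < deg L + (J−1)·deg A_0(n) and rational functions u_0,…,u_{J−1} ∈ K(n) such that p(n)F(n) = (p̃(n)/∏_{j=1}^{I} A_0(n−j))·F(n) + Σ_{i=0}^{J−1} u_i(n+1)F(n+1+i) − Σ_{i=0}^{J−1} u_i(n)F(n+i) for all n at which all rational functions involved are defined. -/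
/-!
Take `x = y / B` with `B(n) = ∏_{j=0}^{I-J} A₀(n-j)` and `y` a polynomial. Summation by parts
(the discrete Lagrange identity for `L` and its adjoint `L*`) shows that `L*(x) · F` is a
difference `T(n) - T(n+1)` with rational coefficients whenever `L F = 0`, so `p F` agrees with
`(p - L*(x)) F` up to such differences. Multiplying by `D(n) = ∏_{j=1}^{I} A₀(n-j)` clears all
denominators of `L*(x)`, because `a₀ = A₀ Ã₀` cancels the factor `A₀(n)` of `B(n)`; so
`G(y) = D · L*(y / B)` is a polynomial, additive in `y`. Comparing top coefficients, `G` raises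
degrees by `d_L + (J-1) deg A₀` with leading factor `lc(A₀)^{J-1} ∑_i [n^{d_L}] a_i`, which
strong nondegeneracy makes nonzero. Eliminating top coefficients of `p D` one at a time leaves
`p̃ = p D - G(y)` of degree below `d_L + (J-1) deg A₀ = deg L + (J-1) deg A₀`.
-/

open Polynomial Finset

namespace Polynomial

section Semiring

variable {R : Type*} [Semiring R]

/-- Allowing `c = 0` spares the leading-term bookkeeping from deciding whether a degree bound
is attained. -/
def HasTopCoeff (P : R[X]) (e : ℕ) (c : R) : Prop :=
  P.natDegree ≤ e ∧ P.coeff e = c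

theorem hasTopCoeff_of_natDegree_le {P : R[X]} {e : ℕ} (h : P.natDegree ≤ e) :
    HasTopCoeff P e (P.coeff e) :=
  ⟨h, rfl⟩

namespace HasTopCoeff

variable {P Q : R[X]} {e f : ℕ} {c d : R}

theorem add (hP : HasTopCoeff P e c) (hQ : HasTopCoeff Q e d) : HasTopCoeff (P + Q) e (c + d) :=
  ⟨natDegree_add_le_of_degree_le hP.1 hQ.1, by rw [coeff_add, hP.2, hQ.2]⟩

theorem sum {ι : Type*} {s : Finset ι} {P : ι → R[X]} {c : ι → R}
    (h : ∀ i ∈ s, HasTopCoeff (P i) e (c i)) :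
    HasTopCoeff (∑ i ∈ s, P i) e (∑ i ∈ s, c i) :=
  ⟨natDegree_sum_le_of_forall_le _ _ fun i hi => (h i hi).1, by
    rw [finsetSum_coeff]; exact Finset.sum_congr rfl fun i hi => (h i hi).2⟩

theorem mul (hP : HasTopCoeff P e c) (hQ : HasTopCoeff Q f d) :
    HasTopCoeff (P * Q) (e + f) (c * d) :=
  ⟨natDegree_mul_le_of_le hP.1 hQ.1, by
    rw [coeff_mul_add_eq_of_natDegree_le hP.1 hQ.1, hP.2, hQ.2]⟩

theorem smul (r : R) (hP : HasTopCoeff P e c) : HasTopCoeff (r • P) e (r * c) :=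
  ⟨(natDegree_smul_le r P).trans hP.1, by rw [coeff_smul, hP.2, smul_eq_mul]⟩

theorem taylor (hP : HasTopCoeff P e c) (r : R) : HasTopCoeff (taylor r P) e c := by
  refine ⟨(natDegree_taylor P r).trans_le hP.1, ?_⟩
  rw [← hP.2]
  rcases hP.1.lt_or_eq with h | rfl
  · rw [coeff_eq_zero_of_natDegree_lt h,
      coeff_eq_zero_of_natDegree_lt ((natDegree_taylor P r).trans_lt h)]
  · simpa only [leadingCoeff, natDegree_taylor] using leadingCoeff_taylor r P

theorem comp_X_add_C (hP : HasTopCoeff P e c) (r : R) : HasTopCoeff (P.comp (X + C r)) e c := by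
  simpa only [taylor_apply] using hP.taylor r

theorem degree_lt (h : HasTopCoeff P e 0) : P.degree < e := by
  refine (degree_lt_iff_coeff_zero P e).2 fun m hm => ?_
  rcases hm.eq_or_lt with rfl | hm
  · exact h.2
  · exact coeff_eq_zero_of_natDegree_lt (h.1.trans_lt hm)

end HasTopCoeff

end Semiring

section Ring

variable {R : Type*} [Ring R]

namespace HasTopCoeff

variable {P Q : R[X]} {e : ℕ} {c d : R}

theorem sub (hP : HasTopCoeff P e c) (hQ : HasTopCoeff Q e d) : HasTopCoeff (P - Q) e (c - d) :=
  ⟨(natDegree_sub_le_of_le hP.1 hQ.1).trans (max_le le_rfl le_rfl), by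
    rw [coeff_sub, hP.2, hQ.2]⟩

theorem comp_X_sub_C (hP : HasTopCoeff P e c) (t : R) : HasTopCoeff (P.comp (X - C t)) e c := by
  simpa only [sub_eq_add_neg, map_neg] using hP.comp_X_add_C (-t)

theorem mul_comp_X_sub_C [NoZeroDivisors R] (h : HasTopCoeff (Q * P) e c) (t : R) :
    HasTopCoeff (Q * P.comp (X - C t)) e c := by
  rcases eq_or_ne Q 0 with rfl | hQ
  · simpa using h
  rcases eq_or_ne P 0 with rfl | hP
  · simpa using h
  have hle : Q.natDegree + P.natDegree ≤ e := natDegree_mul hQ hP ▸ h.1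
  obtain ⟨m, rfl, hm⟩ : ∃ m, e = Q.natDegree + m ∧ P.natDegree ≤ m :=
    ⟨e - Q.natDegree, by omega, by omega⟩
  have hQ' := hasTopCoeff_of_natDegree_le (le_refl Q.natDegree)
  have hQP := hQ'.mul (hasTopCoeff_of_natDegree_le hm)
  have hQP' := hQ'.mul ((hasTopCoeff_of_natDegree_le hm).comp_X_sub_C t)
  exact ⟨hQP'.1, hQP'.2.trans (hQP.2.symm.trans h.2)⟩

end HasTopCoeff

end Ring

theorem exists_degree_sub_lt {K : Type*} [Field K] {G : K[X] →+ K[X]} {N : ℕ} {κ : K}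
    (hκ : κ ≠ 0)
    (hG : ∀ z s, z.natDegree ≤ s → HasTopCoeff (G z) (N + s) (κ * z.coeff s)) (T : K[X]) :
    ∃ y, (T - G y).degree < N := by
  suffices h : ∀ m (T : K[X]), T.degree < (N + m : ℕ) → ∃ y, (T - G y).degree < N from
    h (T.natDegree + 1) T (degree_le_natDegree.trans_lt (Nat.cast_lt.2 (by omega)))
  intro m
  induction m with
  | zero => exact fun T hT => ⟨0, by simpa using hT⟩
  | succ m ih =>
    intro T hT
    have hT' : HasTopCoeff T (N + m) (T.coeff (N + m)) :=
      hasTopCoeff_of_natDegree_le (natDegree_le_of_degree_le (Order.le_of_lt_succ hT))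
    set y₁ := C (T.coeff (N + m) / κ) * X ^ m
    have hstep : HasTopCoeff (T - G y₁) (N + m) 0 := by
      have := hT'.sub (hG y₁ m (natDegree_C_mul_X_pow_le _ _))
      rwa [coeff_C_mul_X_pow, if_pos rfl, mul_div_cancel₀ _ hκ, sub_self] at this
    obtain ⟨y₂, hy₂⟩ := ih _ hstep.degree_lt
    exact ⟨y₁ + y₂, by rwa [map_add, ← sub_sub]⟩

end Polynomial

theorem Finset.sum_range_succ_eq_add_sum_Ioc {M : Type*} [AddCommMonoid M] (f : ℕ → M)
    (n : ℕ) : ∑ i ∈ range (n + 1), f i = f 0 + ∑ i ∈ Ioc 0 n, f i := by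
  rw [Nat.range_succ_eq_Icc_zero, Icc_eq_cons_Ioc (Nat.zero_le n), sum_cons]

theorem WithBot.map_lt_coe_of_lt {x : WithBot ℕ} {n : ℕ} {z : ℤ} {f : ℕ → ℤ}
    (hx : x < n) (hf : ∀ m < n, f m < z) : WithBot.map f x < (z : WithBot ℤ) := by
  cases x with
  | bot => exact WithBot.bot_lt_coe z
  | coe m => exact WithBot.coe_lt_coe.2 (hf m (WithBot.coe_lt_coe.1 hx))

section ShiftProd

variable {R : Type*} [CommRing R]

noncomputable def shiftProd (A : R[X]) (S : Finset ℕ) : R[X] :=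
  ∏ t ∈ S, A.comp (X - C (t : R))

theorem eval_shiftProd (A : R[X]) (S : Finset ℕ) (b : R) :
    (shiftProd A S).eval b = ∏ t ∈ S, A.eval (b - t) := by
  simp [shiftProd, eval_prod, eval_comp]

theorem eval_shiftProd_map_addRightEmbedding (A : R[X]) (S : Finset ℕ) (m : ℕ) (b : R) :
    (shiftProd A (S.map (addRightEmbedding m))).eval b = (shiftProd A S).eval (b - m) := by
  simp only [eval_shiftProd, prod_map, addRightEmbedding_apply, Nat.cast_add, sub_sub,
    add_comm]

theorem shiftProd_Icc_zero (A : R[X]) (n : ℕ) :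
    shiftProd A (Icc 0 n) = A * shiftProd A (Icc 1 n) := by
  rw [shiftProd, Icc_eq_cons_Ioc (Nat.zero_le n), prod_cons, ← Icc_add_one_left_eq_Ioc]
  simp [shiftProd]

theorem hasTopCoeff_shiftProd (A : R[X]) (S : Finset ℕ) :
    HasTopCoeff (shiftProd A S) (#S * A.natDegree) (A.leadingCoeff ^ #S) := by
  have h : ∀ t ∈ S, HasTopCoeff (A.comp (X - C (t : R))) A.natDegree A.leadingCoeff :=
    fun t _ => (hasTopCoeff_of_natDegree_le le_rfl).comp_X_sub_C _
  refine ⟨(natDegree_prod_le _ _).trans ?_, ?_⟩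
  · simpa using sum_le_card_nsmul S _ _ fun t ht => (h t ht).1
  · rw [shiftProd, coeff_prod_of_natDegree_le _ _ _ fun t ht => (h t ht).1,
      prod_congr rfl fun t ht => (h t ht).2, prod_const]

theorem shiftProd_ne_zero [IsDomain R] {A : R[X]} (hA : A ≠ 0) (S : Finset ℕ) :
    shiftProd A S ≠ 0 := fun h =>
  pow_ne_zero #S (leadingCoeff_ne_zero.2 hA) <| by
    simpa [h] using (hasTopCoeff_shiftProd A S).2.symm

end ShiftProd

theorem eval_mul_shiftProd_sdiff_div {K : Type*} [Field K] {A : K[X]} {S T : Finset ℕ}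
    (hST : S ⊆ T) (f : K[X]) {b : K} (hT : (shiftProd A T).eval b ≠ 0) :
    (f * shiftProd A (T \ S)).eval b / (shiftProd A T).eval b =
      f.eval b / (shiftProd A S).eval b := by
  have hsplit : shiftProd A T = shiftProd A (T \ S) * shiftProd A S := (prod_sdiff hST).symm
  rw [hsplit, eval_mul] at hT ⊢
  rw [eval_mul, mul_comm (f.eval b), mul_div_mul_left _ _ (left_ne_zero_of_mul hT)]

section Adjoint

variable {K : Type*} [Field K] {J : ℕ} {a : ℕ → K[X]}

theorem natDegree_le_dLdeg {i : ℕ} (hi : i ≤ J) : (a i).natDegree ≤ dLdeg J a :=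
  le_sup (f := fun i => (a i).natDegree) (mem_range.2 (Nat.lt_succ_of_le hi))

theorem hasTopCoeff_bPoly (J : ℕ) (a : ℕ → K[X]) (k : ℕ) :
    HasTopCoeff (bPoly J a k) (dLdeg J a)
      (∑ j ∈ Icc k J, (j.choose k : K) * (a (J - j)).coeff (dLdeg J a)) :=
  HasTopCoeff.sum fun _ _ =>
    ((hasTopCoeff_of_natDegree_le (natDegree_le_dLdeg (Nat.sub_le _ _))).comp_X_add_C _).smul _

theorem sum_coeff_dLdeg_ne_zero (hstrong : opDegree J a = ((dLdeg J a : ℤ) : WithBot ℤ)) :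
    ∑ i ∈ range (J + 1), (a i).coeff (dLdeg J a) ≠ 0 := by
  intro hc
  have hb : ∀ k, (bPoly J a k).degree < (dLdeg J a + k : ℕ) := by
    rintro (_ | k)
    · rw [Nat.add_zero]
      refine HasTopCoeff.degree_lt ⟨(hasTopCoeff_bPoly J a 0).1, ?_⟩
      rw [(hasTopCoeff_bPoly J a 0).2, ← hc, ← Nat.range_succ_eq_Icc_zero,
        ← sum_range_reflect]
      refine Finset.sum_congr rfl fun i hi => ?_
      rw [Nat.choose_zero_right, Nat.cast_one, one_mul, Nat.add_sub_cancel,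
        Nat.sub_sub_self (Nat.lt_succ_iff.1 (mem_range.1 hi))]
    · exact (degree_le_of_natDegree_le (hasTopCoeff_bPoly J a _).1).trans_lt
        (Nat.cast_lt.2 (by omega))
  have hlt : opDegree J a < ((dLdeg J a : ℤ) : WithBot ℤ) :=
    (Finset.sup_lt_iff (WithBot.bot_lt_coe _)).2 fun k _ =>
      WithBot.map_lt_coe_of_lt (hb k) fun m hm => by omega
  exact hlt.ne hstrong

noncomputable def adjointEval (J : ℕ) (a : ℕ → K[X]) (x : K → K) (b : K) : K :=
  ∑ i ∈ range (J + 1), (a i).eval (b - i) * x (b - i)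

noncomputable def tailSum (J : ℕ) (a : ℕ → K[X]) (x : K → K) (b : K) (i : ℕ) : K :=
  ∑ k ∈ Ioc i J, (a k).eval (b - (k - i : ℕ)) * x (b - (k - i : ℕ))

theorem adjointEval_eq_add_tailSum_zero (x : K → K) (b : K) :
    adjointEval J a x b = (a 0).eval b * x b + tailSum J a x b 0 := by
  simp [adjointEval, tailSum, sum_range_succ_eq_add_sum_Ioc]

theorem tailSum_succ (x : K → K) (b : K) {i : ℕ} (hi : i < J) :
    tailSum J a x (b + 1) i = (a (i + 1)).eval b * x b + tailSum J a x b (i + 1) := by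
  rw [tailSum, ← Icc_add_one_left_eq_Ioc, Icc_eq_cons_Ioc (by omega), sum_cons, tailSum]
  congr 1
  · simp
  · refine Finset.sum_congr rfl fun k hk => ?_
    have hk := (mem_Ioc.1 hk).1
    have : b + 1 - ((k - i : ℕ) : K) = b - ((k - (i + 1) : ℕ) : K) := by
      rw [Nat.cast_sub (by omega), Nat.cast_sub (by omega)]; push_cast; ring
    rw [this]

theorem tailSum_self (x : K → K) (b : K) : tailSum J a x b J = 0 := by
  simp [tailSum]

theorem adjointEval_mul_eq_sub {F : ℕ → K} {n : ℕ}
    (hn : ∑ i ∈ range (J + 1), (a i).eval (n : K) * F (n + i) = 0) (x : K → K) :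
    adjointEval J a x n * F n =
      ∑ i ∈ range J, tailSum J a x n i * F (n + i) -
        ∑ i ∈ range J, tailSum J a x (n + 1) i * F (n + 1 + i) := by
  have hshift : ∑ i ∈ range J, tailSum J a x (n + 1) i * F (n + 1 + i) =
      x n * ∑ i ∈ range J, (a (i + 1)).eval (n : K) * F (n + (i + 1)) +
        ∑ i ∈ range J, tailSum J a x n (i + 1) * F (n + (i + 1)) := by
    rw [mul_sum, ← sum_add_distrib]
    refine Finset.sum_congr rfl fun i hi => ?_
    rw [tailSum_succ x _ (mem_range.1 hi), add_right_comm n 1 i, add_assoc]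
    ring
  have htail := sum_range_succ' (fun i => tailSum J a x n i * F (n + i)) J
  rw [sum_range_succ, tailSum_self] at htail
  rw [sum_range_succ'] at hn
  rw [hshift, adjointEval_eq_add_tailSum_zero]
  simp only [add_zero] at hn htail
  linear_combination x n * hn - htail

end Adjoint

section ClearedAdjoint

variable {K : Type*} [Field K] {J I : ℕ} {a : ℕ → K[X]} {A₀ Acot₀ : K[X]}

noncomputable def tailNumerator (J I : ℕ) (a : ℕ → K[X]) (A₀ y : K[X]) (T : Finset ℕ)
    (i : ℕ) : K[X] :=
  ∑ k ∈ Ioc i J, (a k * y).comp (X - C ((k - i : ℕ) : K)) *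
    shiftProd A₀ (T \ (Icc 0 (I - J)).map (addRightEmbedding (k - i)))

/-- `D · L*(y / B)` for `D = shiftProd A₀ (Icc 1 I)` and `B = shiftProd A₀ (Icc 0 (I - J))`:
the factor `A₀(n)` of `B(n)` cancels against `a₀ = A₀ · Acot₀`, leaving a polynomial. -/
noncomputable def clearedAdjoint (J I : ℕ) (a : ℕ → K[X]) (A₀ Acot₀ y : K[X]) : K[X] :=
  Acot₀ * y * shiftProd A₀ (Icc 1 I \ Icc 1 (I - J)) + tailNumerator J I a A₀ y (Icc 1 I) 0

theorem tailNumerator_add (T : Finset ℕ) (i : ℕ) (y z : K[X]) :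
    tailNumerator J I a A₀ (y + z) T i =
      tailNumerator J I a A₀ y T i + tailNumerator J I a A₀ z T i := by
  simp only [tailNumerator, mul_add, add_comp, add_mul, sum_add_distrib]

theorem clearedAdjoint_add (y z : K[X]) :
    clearedAdjoint J I a A₀ Acot₀ (y + z) =
      clearedAdjoint J I a A₀ Acot₀ y + clearedAdjoint J I a A₀ Acot₀ z := by
  rw [clearedAdjoint, clearedAdjoint, clearedAdjoint, tailNumerator_add]
  ring

theorem map_addRightEmbedding_Icc_subset (hI : J ≤ I) {m : ℕ} (hm : 1 ≤ m ∧ m ≤ J) :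
    (Icc 0 (I - J)).map (addRightEmbedding m) ⊆ Icc 1 I := by
  rw [map_add_right_Icc]
  exact Icc_subset_Icc (by omega) (by omega)

theorem eval_tailNumerator_div (hI : J ≤ I) (y : K[X]) {T : Finset ℕ} (hT : Icc 1 I ⊆ T)
    {b : K} (hb : (shiftProd A₀ T).eval b ≠ 0) (i : ℕ) :
    (tailNumerator J I a A₀ y T i).eval b / (shiftProd A₀ T).eval b =
      tailSum J a (fun t => y.eval t / (shiftProd A₀ (Icc 0 (I - J))).eval t) b i := by
  rw [tailNumerator, eval_finsetSum, sum_div, tailSum]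
  refine Finset.sum_congr rfl fun k hk => ?_
  have hsub := (map_addRightEmbedding_Icc_subset hI (m := k - i)
    (by rw [mem_Ioc] at hk; omega)).trans hT
  rw [eval_mul_shiftProd_sdiff_div hsub _ hb, eval_shiftProd_map_addRightEmbedding, eval_comp,
    eval_mul]
  simp only [eval_sub, eval_X, eval_C, mul_div_assoc]

theorem eval_clearedAdjoint_div (hI : J ≤ I) (hfact : a 0 = A₀ * Acot₀) (y : K[X]) {b : K}
    (hb : (shiftProd A₀ (Icc 0 I)).eval b ≠ 0) :
    (clearedAdjoint J I a A₀ Acot₀ y).eval b / (shiftProd A₀ (Icc 1 I)).eval b =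
      adjointEval J a (fun t => y.eval t / (shiftProd A₀ (Icc 0 (I - J))).eval t) b := by
  rw [shiftProd_Icc_zero, eval_mul] at hb
  obtain ⟨hA₀, hD⟩ := mul_ne_zero_iff.1 hb
  rw [clearedAdjoint, eval_add, add_div,
    eval_mul_shiftProd_sdiff_div (Icc_subset_Icc le_rfl (Nat.sub_le I J)) _ hD,
    eval_tailNumerator_div hI y subset_rfl hD, adjointEval_eq_add_tailSum_zero,
    shiftProd_Icc_zero, hfact]
  simp only [eval_mul]
  field_simp

theorem isSummableRat_clearedAdjoint {F : ℕ → K} (hann : Annihilates J a F) (hJ : 0 < J)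
    (hI : J ≤ I) (hfact : a 0 = A₀ * Acot₀) (hA₀ : A₀ ≠ 0) (y : K[X]) :
    IsSummableRat J F (clearedAdjoint J I a A₀ Acot₀ y) (shiftProd A₀ (Icc 1 I)) := by
  set x : K → K := fun t => y.eval t / (shiftProd A₀ (Icc 0 (I - J))).eval t
  have hu : ∀ b, (shiftProd A₀ (Icc 0 I)).eval b ≠ 0 → ∀ i,
      (-tailNumerator J I a A₀ y (Icc 0 I) i).eval b / (shiftProd A₀ (Icc 0 I)).eval b =
        -tailSum J a x b i := fun b hb i => by
    rw [eval_neg, neg_div,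
      eval_tailNumerator_div hI y (Icc_subset_Icc (Nat.zero_le 1) le_rfl) hb]
  refine ⟨fun i => -tailNumerator J I a A₀ y (Icc 0 I) i, fun _ => shiftProd A₀ (Icc 0 I),
    fun _ _ => shiftProd_ne_zero hA₀ _, fun n _ hv => ?_⟩
  obtain ⟨hv₀, hv₁⟩ := hv 0 hJ
  simp only [hu _ hv₀, hu _ hv₁, neg_mul, sum_neg_distrib,
    eval_clearedAdjoint_div hI hfact y hv₀, adjointEval_mul_eq_sub (hann n)]
  ring

theorem hasTopCoeff_tailNumerator {d : ℕ} (ha : ∀ k ≤ J, (a k).natDegree ≤ d) (hI : J ≤ I)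
    (i : ℕ) {y : K[X]} {s : ℕ} (hy : y.natDegree ≤ s) :
    HasTopCoeff (tailNumerator J I a A₀ y (Icc 1 I) i) (d + (J - 1) * A₀.natDegree + s)
      (∑ k ∈ Ioc i J, A₀.leadingCoeff ^ (J - 1) * (a k).coeff d * y.coeff s) := by
  refine HasTopCoeff.sum fun k hk => ?_
  have hsub := map_addRightEmbedding_Icc_subset hI (m := k - i) (by rw [mem_Ioc] at hk; omega)
  have hcard : #(Icc 1 I \ (Icc 0 (I - J)).map (addRightEmbedding (k - i))) = J - 1 := by
    rw [card_sdiff_of_subset hsub, card_map, Nat.card_Icc, Nat.card_Icc]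
    omega
  have hterm := ((hasTopCoeff_of_natDegree_le (ha k (mem_Ioc.1 hk).2)).mul
    (hasTopCoeff_of_natDegree_le hy)).comp_X_sub_C ((k - i : ℕ) : K) |>.mul
    (hcard ▸ hasTopCoeff_shiftProd A₀ _)
  rw [add_right_comm] at hterm
  exact ⟨hterm.1, hterm.2.trans (by ring)⟩

theorem hasTopCoeff_clearedAdjoint {d : ℕ} (ha : ∀ k ≤ J, (a k).natDegree ≤ d) (hJ : 0 < J)
    (hI : J ≤ I) (hfact : a 0 = A₀ * Acot₀) {y : K[X]} {s : ℕ} (hy : y.natDegree ≤ s) :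
    HasTopCoeff (clearedAdjoint J I a A₀ Acot₀ y) (d + (J - 1) * A₀.natDegree + s)
      (A₀.leadingCoeff ^ (J - 1) * (∑ k ∈ range (J + 1), (a k).coeff d) * y.coeff s) := by
  set S := Icc 1 I \ Icc 1 (I - J)
  have hIS : I ∈ S := by simp only [S, mem_sdiff, mem_Icc]; omega
  have hcard : #(S.erase I) = J - 1 := by
    rw [card_erase_of_mem hIS, card_sdiff_of_subset (Icc_subset_Icc le_rfl (Nat.sub_le I J)),
      Nat.card_Icc, Nat.card_Icc]
    omega
  have hlead : HasTopCoeff (Acot₀ * A₀.comp (X - C (I : K))) d ((a 0).coeff d) := by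
    refine HasTopCoeff.mul_comp_X_sub_C ?_ _
    rw [mul_comm, ← hfact]
    exact hasTopCoeff_of_natDegree_le (ha 0 (Nat.zero_le J))
  have hterm₀ : HasTopCoeff (Acot₀ * y * shiftProd A₀ S) (d + (J - 1) * A₀.natDegree + s)
      ((a 0).coeff d * A₀.leadingCoeff ^ (J - 1) * y.coeff s) := by
    rw [shiftProd, ← mul_prod_erase S _ hIS, ← shiftProd,
      show ∀ P Q : K[X], Acot₀ * y * (P * Q) = Acot₀ * P * Q * y by intros; ring]
    exact (hlead.mul (hcard ▸ hasTopCoeff_shiftProd A₀ _)).mul (hasTopCoeff_of_natDegree_le hy)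
  have := hterm₀.add (hasTopCoeff_tailNumerator ha hI 0 hy)
  refine ⟨this.1, this.2.trans ?_⟩
  rw [sum_range_succ_eq_add_sum_Ioc, mul_add, add_mul, mul_sum, sum_mul]
  ring

end ClearedAdjoint

theorem rational_reduction_head_general {K : Type*} [Field K]
    (F : ℕ → K) (J : ℕ) (hJ : 0 < J) (a : ℕ → K[X])
    (hann : Annihilates J a F)
    (hstrong : opDegree J a = ((dLdeg J a : ℤ) : WithBot ℤ))
    (A₀ Acot₀ : K[X]) (hfact : a 0 = A₀ * Acot₀)
    (p : K[X]) (I : ℕ) (hI : J ≤ I) :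
    ∃ ptilde : K[X],
      WithBot.map (fun d : ℕ => (d : ℤ)) ptilde.degree <
        opDegree J a + ((((J - 1) * A₀.natDegree : ℕ) : ℤ) : WithBot ℤ) ∧
      ∃ u v : ℕ → K[X], (∀ i < J, v i ≠ 0) ∧ ∀ n : ℕ,
        (∏ j ∈ Finset.Icc 1 I, A₀.eval ((n : K) - (j : K))) ≠ 0 →
        (∀ i < J, (v i).eval (n : K) ≠ 0 ∧ (v i).eval ((n : K) + 1) ≠ 0) →
        p.eval (n : K) * F n =
          ptilde.eval (n : K) / (∏ j ∈ Finset.Icc 1 I, A₀.eval ((n : K) - (j : K))) * F n +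
            ((∑ i ∈ Finset.range J,
                (u i).eval ((n : K) + 1) / (v i).eval ((n : K) + 1) * F (n + 1 + i)) -
              ∑ i ∈ Finset.range J, (u i).eval (n : K) / (v i).eval (n : K) * F (n + i)) := by
  by_cases hA₀ : A₀ = 0
  · refine ⟨0, ?_, fun _ => 0, fun _ => 1, fun _ _ => one_ne_zero, fun n hD _ => ?_⟩
    · rw [hstrong, degree_zero]
      exact WithBot.bot_lt_coe _
    · exact absurd (prod_eq_zero (mem_Icc.2 ⟨le_rfl, by omega⟩) (by simp [hA₀])) hD
  have hκ := mul_ne_zero (pow_ne_zero (J - 1) (leadingCoeff_ne_zero.2 hA₀))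
    (sum_coeff_dLdeg_ne_zero hstrong)
  obtain ⟨y, hy⟩ := exists_degree_sub_lt (G := AddMonoidHom.mk' _ clearedAdjoint_add) hκ
    (fun _ _ => hasTopCoeff_clearedAdjoint (fun _ => natDegree_le_dLdeg) hJ hI hfact)
    (p * shiftProd A₀ (Icc 1 I))
  obtain ⟨u, v, hv, hsum⟩ := isSummableRat_clearedAdjoint hann hJ hI hfact hA₀ y
  refine ⟨p * shiftProd A₀ (Icc 1 I) - clearedAdjoint J I a A₀ Acot₀ y, ?_, u, v, hv,
    fun n hD hvn => ?_⟩
  · rw [hstrong, ← WithBot.coe_add]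
    exact WithBot.map_lt_coe_of_lt hy fun m hm => by exact_mod_cast hm
  · rw [← eval_shiftProd] at hD ⊢
    rw [← hsum n hD hvn, eval_sub, eval_mul, sub_div, mul_div_cancel_right₀ _ hD]
    ring

/-- Let `L = ∑_{i=0}^J a_i(n) σ^i` be a strongly nondegenerated annihilator
of the holonomic sequence `F` of order `J > 0`, and write `a_0(n) = A₀(n)·Acot₀(n)`.
Then for every polynomial `p` and every `I ≥ J` there exist a polynomial `p̃` with
`deg p̃ < deg L + (J-1)·deg A₀` and rational functions `u_i = u i / v i`, `0 ≤ i ≤ J-1`,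
such that `p(n)F(n) = (p̃(n)/∏_{j=1}^I A₀(n-j))·F(n)
+ ∑_i u_i(n+1)F(n+1+i) - ∑_i u_i(n)F(n+i)` wherever everything is defined. -/
theorem rational_reduction_head {K : Type*} [Field K] [CharZero K]
    (F : ℕ → K) (hF : Holonomic F) (J : ℕ) (hJ : 0 < J) (a : ℕ → K[X]) (haJ : a J ≠ 0)
    (hann : Annihilates J a F)
    (hstrong : opDegree J a = ((dLdeg J a : ℤ) : WithBot ℤ))
    (A₀ Acot₀ : K[X]) (hfact : a 0 = A₀ * Acot₀)
    (p : K[X]) (I : ℕ) (hI : J ≤ I) :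
    ∃ ptilde : K[X],
      WithBot.map (fun d : ℕ => (d : ℤ)) ptilde.degree <
        opDegree J a + ((((J - 1) * A₀.natDegree : ℕ) : ℤ) : WithBot ℤ) ∧
      ∃ u v : ℕ → K[X], (∀ i < J, v i ≠ 0) ∧ ∀ n : ℕ,
        (∏ j ∈ Finset.Icc 1 I, A₀.eval ((n : K) - (j : K))) ≠ 0 →
        (∀ i < J, (v i).eval (n : K) ≠ 0 ∧ (v i).eval ((n : K) + 1) ≠ 0) →
        p.eval (n : K) * F n =
          ptilde.eval (n : K) / (∏ j ∈ Finset.Icc 1 I, A₀.eval ((n : K) - (j : K))) * F n +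
            ((∑ i ∈ Finset.range J,
                (u i).eval ((n : K) + 1) / (v i).eval ((n : K) + 1) * F (n + 1 + i)) -
              ∑ i ∈ Finset.range J, (u i).eval (n : K) / (v i).eval (n : K) * F (n + i)) :=
  rational_reduction_head_general F J hJ a hann hstrong A₀ Acot₀ hfact p I hI
end

section
/- The Domb numbers satisfy the three-term recurrence (n+2)³·Domb(n+2) = 2(2n+3)(5n²+15n+12)·Domb(n+1) − 64(n+1)³·Domb(n) for all n ∈ ℕ. Equivalently, the operator 8(n+2)³σ² − (2n+3)(5n²+15n+12)σ + 2(n+1)³ annihilates the sequence F(n) = Domb(n)/16ⁿ. -/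
/-!
Creative telescoping (Zeilberger). Write `t(n, k)` for the summand of `Domb n`. The ratios
`t(n+1, k) / t(n, k)` and `t(n, k+1) / t(n, k)` are rational functions of `n` and `k`; cleared of
denominators, the two contiguity relations hold for *all* `n, k`, including where the
summand vanishes. They reduce the recurrence operator applied to `t(·, k)` to a rational multiple of
`t(n+2, k)`, which is checked to equal `G(n, k+1) - G(n, k)` for an explicit certificate
`G(n, k) = R(n, k) t(n+2, k)`. Summing over `k` telescopes, and `G` vanishes at both ends.
-/

open Finset

/-- The Domb numbers `Domb(n) = ∑_{k=0}^n binom(n,k)² binom(2k,k) binom(2(n-k),n-k)`. -/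
def Domb (n : ℕ) : ℕ :=
  ∑ k ∈ Finset.range (n + 1),
    (n.choose k) ^ 2 * ((2 * k).choose k) * ((2 * (n - k)).choose (n - k))

def dombTerm (n k : ℕ) : ℕ :=
  n.choose k ^ 2 * Nat.centralBinom k * Nat.centralBinom (n - k)

lemma dombTerm_eq_zero_of_lt {n k : ℕ} (h : n < k) : dombTerm n k = 0 := by
  simp [dombTerm, Nat.choose_eq_zero_of_lt h]

lemma domb_eq_sum_dombTerm_of_le {m N : ℕ} (h : m ≤ N) :
    (Domb m : ℚ) = ∑ k ∈ range (N + 1), (dombTerm m k : ℚ) := by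
  rw [show Domb m = ∑ k ∈ range (m + 1), dombTerm m k from rfl, Nat.cast_sum]
  refine sum_subset (range_subset_range.mpr (by omega)) fun k _ hk => ?_
  rw [dombTerm_eq_zero_of_lt (by simpa using hk), Nat.cast_zero]

lemma cast_centralBinom_succ (m : ℕ) :
    (Nat.centralBinom (m + 1) : ℚ) = 2 * (2 * m + 1) * Nat.centralBinom m / (m + 1) := by
  rw [eq_div_iff (by positivity), mul_comm]
  exact_mod_cast Nat.succ_mul_centralBinom_succ m

lemma dombTerm_succ_left (n k : ℕ) :
    ((n : ℚ) + 1 - k) ^ 3 * dombTerm (n + 1) k =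
      2 * ((n : ℚ) + 1) ^ 2 * (2 * n - 2 * k + 1) * dombTerm n k := by
  rcases le_or_gt k n with hk | hk
  · obtain ⟨m, rfl⟩ := Nat.exists_eq_add_of_le hk
    have hC : ((k + m + 1).choose k : ℚ) = (k + m).choose k * (k + m + 1) / (m + 1) := by
      rw [eq_div_iff (by positivity)]
      have h := Nat.choose_mul_succ_eq (k + m) k
      rw [show k + m + 1 - k = m + 1 by omega] at h
      exact_mod_cast h.symm
    simp only [dombTerm, show k + m + 1 - k = m + 1 by omega, Nat.add_sub_cancel_left]
    push_cast
    rw [hC, cast_centralBinom_succ]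
    field_simp
    ring
  · rw [dombTerm_eq_zero_of_lt hk, Nat.cast_zero, mul_zero]
    rcases (Nat.succ_le_of_lt hk).eq_or_lt with rfl | hk'
    · push_cast
      ring
    · rw [dombTerm_eq_zero_of_lt hk', Nat.cast_zero, mul_zero]

lemma dombTerm_succ_right (n k : ℕ) :
    ((k : ℚ) + 1) ^ 3 * (2 * n - 2 * k - 1) * dombTerm n (k + 1) =
      (2 * k + 1) * ((n : ℚ) - k) ^ 3 * dombTerm n k := by
  rcases lt_or_ge k n with hk | hk
  · obtain ⟨m, rfl⟩ := Nat.exists_eq_add_of_lt hk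
    have hC : ((k + m + 1).choose (k + 1) : ℚ) = (k + m + 1).choose k * (m + 1) / (k + 1) := by
      rw [eq_div_iff (by positivity)]
      have h := Nat.choose_succ_right_eq (k + m + 1) k
      rw [show k + m + 1 - k = m + 1 by omega] at h
      exact_mod_cast h
    simp only [dombTerm, show k + m + 1 - k = m + 1 by omega,
      show k + m + 1 - (k + 1) = m by omega]
    push_cast
    rw [hC, cast_centralBinom_succ, cast_centralBinom_succ]
    field_simp
    ring
  · rw [dombTerm_eq_zero_of_lt (Nat.lt_succ_of_le hk), Nat.cast_zero, mul_zero]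
    rcases hk.eq_or_lt with rfl | hk'
    · ring
    · rw [dombTerm_eq_zero_of_lt hk', Nat.cast_zero, mul_zero]

-- Output of Zeilberger's algorithm for the summand `dombTerm n k`.
def dombCertificatePoly (x y : ℚ) : ℚ :=
  (-56 + 74 * y - 30 * y ^ 2 + 4 * y ^ 3)
  + x * (-216 + 237 * y - 78 * y ^ 2 + 8 * y ^ 3)
  + x ^ 2 * (-326 + 278 * y - 66 * y ^ 2 + 4 * y ^ 3)
  + x ^ 3 * (-240 + 141 * y - 18 * y ^ 2)
  + x ^ 4 * (-86 + 26 * y)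
  - 12 * x ^ 5

def dombCertificate (n k : ℕ) : ℚ :=
  (k : ℚ) ^ 3 * dombCertificatePoly n k /
    (((n : ℚ) + 1) ^ 2 * ((n : ℚ) + 2) ^ 2 * (2 * ((n : ℚ) - k) + 3)) * dombTerm (n + 2) k

lemma dombTerm_recurrence_eq_sub_certificate (n k : ℕ) :
    ((n : ℚ) + 2) ^ 3 * dombTerm (n + 2) k
      - 2 * (2 * (n : ℚ) + 3) * (5 * (n : ℚ) ^ 2 + 15 * n + 12) * dombTerm (n + 1) k
      + 64 * ((n : ℚ) + 1) ^ 3 * dombTerm n k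
    = dombCertificate n (k + 1) - dombCertificate n k := by
  have hodd₃ : 2 * ((n : ℚ) - k) + 3 ≠ 0 := by
    exact_mod_cast (by omega : 2 * ((n : ℤ) - k) + 3 ≠ 0)
  have hodd₁ : 2 * ((n : ℚ) - k) + 1 ≠ 0 := by
    exact_mod_cast (by omega : 2 * ((n : ℤ) - k) + 1 ≠ 0)
  have h₁ := dombTerm_succ_left (n + 1) k
  have h₀ := dombTerm_succ_left n k
  have h₂ := dombTerm_succ_right (n + 2) k
  push_cast at h₁ h₂
  have e₁ : (dombTerm (n + 1) k : ℚ) = ((n : ℚ) + 2 - k) ^ 3 * dombTerm (n + 2) k /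
      (2 * ((n : ℚ) + 2) ^ 2 * (2 * ((n : ℚ) - k) + 3)) := by
    rw [eq_div_iff (by positivity)]
    linear_combination -h₁
  have e₀ : (dombTerm n k : ℚ) = ((n : ℚ) + 1 - k) ^ 3 * dombTerm (n + 1) k /
      (2 * ((n : ℚ) + 1) ^ 2 * (2 * ((n : ℚ) - k) + 1)) := by
    rw [eq_div_iff (by positivity)]
    linear_combination -h₀
  have e₂ : (dombTerm (n + 2) (k + 1) : ℚ) =
      (2 * (k : ℚ) + 1) * ((n : ℚ) + 2 - k) ^ 3 * dombTerm (n + 2) k /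
        (((k : ℚ) + 1) ^ 3 * (2 * ((n : ℚ) - k) + 3)) := by
    rw [eq_div_iff (by positivity)]
    linear_combination h₂
  rw [dombCertificate, dombCertificate, e₂, e₀, e₁, dombCertificatePoly, dombCertificatePoly]
  push_cast
  rw [show 2 * ((n : ℚ) - (k + 1)) + 3 = 2 * ((n : ℚ) - k) + 1 by ring]
  field_simp
  ring

lemma domb_recurrence_rat (n : ℕ) :
    ((n : ℚ) + 2) ^ 3 * Domb (n + 2)
      - 2 * (2 * (n : ℚ) + 3) * (5 * (n : ℚ) ^ 2 + 15 * n + 12) * Domb (n + 1)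
      + 64 * ((n : ℚ) + 1) ^ 3 * Domb n = 0 := by
  rw [domb_eq_sum_dombTerm_of_le le_rfl,
    domb_eq_sum_dombTerm_of_le (n.le_succ.trans n.succ.le_succ),
    domb_eq_sum_dombTerm_of_le n.succ.le_succ, mul_sum, mul_sum, mul_sum, ← sum_sub_distrib,
    ← sum_add_distrib, sum_congr rfl fun k _ => dombTerm_recurrence_eq_sub_certificate n k,
    sum_range_sub]
  simp [dombCertificate, dombTerm_eq_zero_of_lt]

/-- The Domb numbers satisfy the three-term recurrence
`(n+2)³ Domb(n+2) = 2(2n+3)(5n²+15n+12) Domb(n+1) - 64(n+1)³ Domb(n)`; equivalently, the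
operator `8(n+2)³σ² - (2n+3)(5n²+15n+12)σ + 2(n+1)³` annihilates `F(n) = Domb(n)/16ⁿ`. -/
theorem domb_recurrence :
    (∀ n : ℕ, ((n : ℤ) + 2) ^ 3 * Domb (n + 2) =
      2 * (2 * (n : ℤ) + 3) * (5 * (n : ℤ) ^ 2 + 15 * (n : ℤ) + 12) * Domb (n + 1) -
        64 * ((n : ℤ) + 1) ^ 3 * Domb n) ∧
    (∀ n : ℕ, 8 * ((n : ℚ) + 2) ^ 3 * ((Domb (n + 2) : ℚ) / 16 ^ (n + 2)) -
        (2 * (n : ℚ) + 3) * (5 * (n : ℚ) ^ 2 + 15 * (n : ℚ) + 12) *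
          ((Domb (n + 1) : ℚ) / 16 ^ (n + 1)) +
        2 * ((n : ℚ) + 1) ^ 3 * ((Domb n : ℚ) / 16 ^ n) = 0) := by
  refine ⟨fun n => ?_, fun n => ?_⟩
  · qify
    linear_combination domb_recurrence_rat n
  · linear_combination (1 / (32 * 16 ^ n : ℚ)) * domb_recurrence_rat n
end

section
/- Let f_n = Σ_{k=0}^{n} binom(n,k)³ be the Franel numbers and, for integers n ≥ 2, set F(n) = (−1)ⁿ·f_n/(n(n−1)) ∈ ℚ. Then for all integers n ≥ 2, (2 − 3n)·F(n) = G(n+1) − G(n), where G(n) = (8n³ − 5n − 2)·F(n) + (n+1)³·F(n+1). In particular (2−3n)F(n) is summable. -/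
/-!
The Franel numbers satisfy `(n+2)² f(n+2) = (7n²+21n+16) f(n+1) + 8(n+1)² f(n)`, proved by creative
telescoping: with `Bₖ = binom(n+1, k-1)`, the summand of the recurrence equals `R(k+1) - R(k)` for
`R(k) = c(n, k) Bₖ³ / (n+1)³` and a polynomial certificate `c` found by Zeilberger's algorithm.
In terms of `F` the recurrence reads
`(n+2)³ F(n+2) + n (7n²+21n+16) F(n+1) - 8 (n+1) n (n-1) F(n) = 0`,
and `G(n+1) - G(n) - (2-3n) F(n)` is exactly this combination.
-/

open Finset

/-- The Franel numbers `f(n) = ∑_{k=0}^n binom(n,k)³`. -/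
def franel (n : ℕ) : ℕ := ∑ k ∈ Finset.range (n + 1), (n.choose k) ^ 3

/-- `F(n) = (-1)ⁿ f(n)/(n(n-1))` for the Franel numbers `f(n)`. -/
noncomputable def franelF (n : ℕ) : ℚ :=
  (-1 : ℚ) ^ n * (franel n : ℚ) / ((n : ℚ) * ((n : ℚ) - 1))

/-- `G(n) = (8n³ - 5n - 2)·F(n) + (n+1)³·F(n+1)`. -/
noncomputable def franelG (n : ℕ) : ℚ :=
  (8 * (n : ℚ) ^ 3 - 5 * (n : ℚ) - 2) * franelF n + ((n : ℚ) + 1) ^ 3 * franelF (n + 1)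

section Binomial

variable {R : Type*} [CommRing R]

theorem Nat.cast_succ_mul_choose_succ (m k : ℕ) :
    ((k : R) + 1) * m.choose (k + 1) = ((m : R) - k) * m.choose k := by
  rcases le_or_gt k m with h | h
  · have := congrArg (Nat.cast (R := R)) (Nat.choose_succ_right_eq m k)
    push_cast [Nat.cast_sub h] at this
    linear_combination this
  · simp [Nat.choose_eq_zero_of_lt h, Nat.choose_eq_zero_of_lt (Nat.lt_succ_of_lt h)]

theorem Nat.cast_succ_mul_choose_succ_eq_sub_mul (n k : ℕ) :
    ((n : R) + 1) * n.choose (k + 1) = ((n : R) - k) * (n + 1).choose (k + 1) := by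
  rw [Nat.choose_succ_succ, Nat.cast_add]
  linear_combination Nat.cast_succ_mul_choose_succ (R := R) n k

theorem franel_eq_sum_range (n N : ℕ) (hN : n + 1 ≤ N) :
    (franel n : R) = ∑ k ∈ range N, (n.choose k : R) ^ 3 := by
  rw [franel, Nat.cast_sum]
  push_cast
  refine sum_subset (range_subset_range.mpr hN) fun k _ hk => ?_
  rw [Nat.choose_eq_zero_of_lt (by simpa using hk)]
  simp

end Binomial

section Certificate

variable {K : Type*} [Field K]

/-- Zeilberger's certificate for the Franel recurrence. -/
def franelCert (n k : K) : K :=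
  -72 + 78*k - 30*k^2 + 4*k^3 + n*(-272 + 249*k - 78*k^2 + 8*k^3)
  + n^2*(-402 + 291*k - 66*k^2 + 4*k^3) + n^3*(-290 + 147*k - 18*k^2)
  + n^4*(-102 + 27*k) - 14*n^5

/-- With `a = binom(n+1,k)`, `b = binom(n+1,k+1)`, so that `binom(n+2,k+1) = a + b` and
`binom(n,k+1) = (n-k) b/(n+1)`, the summand of the recurrence telescopes. -/
theorem franelCert_telescopes {n k a b : K} (hn : n + 1 ≠ 0) (hk : k + 1 ≠ 0)
    (hab : (k + 1) * b = (n + 1 - k) * a) :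
    (n + 2) ^ 2 * (a + b) ^ 3 - (7 * n ^ 2 + 21 * n + 16) * b ^ 3
        - 8 * (n + 1) ^ 2 * ((n - k) * b / (n + 1)) ^ 3
      = (franelCert n (k + 2) * b ^ 3 - franelCert n (k + 1) * a ^ 3) / (n + 1) ^ 3 := by
  have hb : b = (n + 1 - k) * a / (k + 1) := by
    rw [eq_div_iff hk]
    linear_combination hab
  subst hb
  simp only [franelCert]
  field_simp
  ring

end Certificate

section Recurrence

variable (n : ℕ)

def franelSummand (k : ℕ) : ℚ :=
  ((n : ℚ) + 2) ^ 2 * ((n + 2).choose k : ℚ) ^ 3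
    - (7 * (n : ℚ) ^ 2 + 21 * n + 16) * ((n + 1).choose k : ℚ) ^ 3
    - 8 * ((n : ℚ) + 1) ^ 2 * (n.choose k : ℚ) ^ 3

/-- `R(j+1)` in the notation of the header; `R(0) = 0`. -/
def franelCertTerm (j : ℕ) : ℚ :=
  franelCert (n : ℚ) (j + 1) * ((n + 1).choose j : ℚ) ^ 3 / ((n : ℚ) + 1) ^ 3

theorem franelSummand_zero : franelSummand n 0 = franelCertTerm n 0 := by
  have hn : (n : ℚ) + 1 ≠ 0 := by positivity
  simp only [franelSummand, franelCertTerm, franelCert, Nat.choose_zero_right]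
  field_simp
  push_cast
  ring

theorem franelSummand_succ (k : ℕ) :
    franelSummand n (k + 1) = franelCertTerm n (k + 1) - franelCertTerm n k := by
  have hn : (n : ℚ) + 1 ≠ 0 := by positivity
  have hk : (k : ℚ) + 1 ≠ 0 := by positivity
  have hab := Nat.cast_succ_mul_choose_succ (R := ℚ) (n + 1) k
  push_cast at hab
  have hc : (n.choose (k + 1) : ℚ) = (n - k) * (n + 1).choose (k + 1) / (n + 1) := by
    rw [eq_div_iff hn]
    linear_combination Nat.cast_succ_mul_choose_succ_eq_sub_mul (R := ℚ) n k
  have key := franelCert_telescopes hn hk hab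
  rw [← hc] at key
  simp only [franelSummand, franelCertTerm, Nat.choose_succ_succ (n + 1) k]
  push_cast
  rw [show (k : ℚ) + 1 + 1 = k + 2 by ring]
  linear_combination key

theorem sum_franelSummand : ∑ k ∈ range (n + 3), franelSummand n k = 0 := by
  rw [sum_range_succ', sum_congr rfl fun k _ => franelSummand_succ n k, sum_range_sub,
    franelSummand_zero]
  simp [franelCertTerm]

theorem franel_recurrence :
    (n + 2) ^ 2 * franel (n + 2)
      = (7 * n ^ 2 + 21 * n + 16) * franel (n + 1) + 8 * (n + 1) ^ 2 * franel n := by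
  suffices ((n : ℚ) + 2) ^ 2 * franel (n + 2)
      = (7 * (n : ℚ) ^ 2 + 21 * n + 16) * franel (n + 1) + 8 * ((n : ℚ) + 1) ^ 2 * franel n by
    exact_mod_cast this
  rw [franel_eq_sum_range (n + 2) (n + 3) le_rfl, franel_eq_sum_range (n + 1) (n + 3) (by omega),
    franel_eq_sum_range n (n + 3) (by omega), mul_sum, mul_sum, mul_sum, ← sub_eq_zero,
    ← sum_franelSummand n]
  simp only [franelSummand, sum_sub_distrib]
  ring

end Recurrence

theorem franelF_recurrence (n : ℕ) (hn : 2 ≤ n) :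
    ((n : ℚ) + 2) ^ 3 * franelF (n + 2) + n * (7 * (n : ℚ) ^ 2 + 21 * n + 16) * franelF (n + 1)
      - 8 * ((n : ℚ) + 1) * n * (n - 1) * franelF n = 0 := by
  have hn' : (2 : ℚ) ≤ n := by exact_mod_cast hn
  have hn0 : (n : ℚ) ≠ 0 := by linarith
  have hn1 : (n : ℚ) - 1 ≠ 0 := by linarith
  have hn1' : (n : ℚ) + 1 ≠ 0 := by linarith
  have hn2 : (n : ℚ) + 2 ≠ 0 := by linarith
  -- each term is `c` times the corresponding term of `franel_recurrence`
  set c := (-1 : ℚ) ^ n / (n + 1)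
  have hF2 : ((n : ℚ) + 2) ^ 3 * franelF (n + 2) = c * ((n + 2) ^ 2 * franel (n + 2)) := by
    simp only [c, franelF, pow_add]
    push_cast
    rw [show (n : ℚ) + 2 - 1 = n + 1 by ring]
    field_simp
  have hF1 : (n : ℚ) * franelF (n + 1) = -c * franel (n + 1) := by
    simp only [c, franelF, pow_succ, Nat.cast_succ, add_sub_cancel_right]
    field_simp
  have hF0 : ((n : ℚ) + 1) * n * (n - 1) * franelF n = c * ((n + 1) ^ 2 * franel n) := by
    simp only [c, franelF]
    field_simp
  have hrec := congrArg (Nat.cast (R := ℚ)) (franel_recurrence n)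
  push_cast at hrec
  linear_combination hF2 + (7 * (n : ℚ) ^ 2 + 21 * n + 16) * hF1 - 8 * hF0 + c * hrec

/-- With `F(n) = (-1)ⁿ f(n)/(n(n-1))` for the Franel numbers `f(n)`,
one has `(2-3n)·F(n) = G(n+1) - G(n)` for all `n ≥ 2`, where
`G(n) = (8n³-5n-2)F(n) + (n+1)³F(n+1)`; in particular `(2-3n)F(n)` is summable. -/
theorem franel_telescoping (n : ℕ) (hn : 2 ≤ n) :
    (2 - 3 * (n : ℚ)) * franelF n = franelG (n + 1) - franelG n := by
  simp only [franelG]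
  push_cast
  linear_combination -franelF_recurrence n hn
end
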